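/- Over an arbitrary commutative ring K, the ring of multisymmetric functions K[V^m]^{S_n} is generated as a K-algebra by the elements σ_r(w) for r ∈ {1,...,n} and w a nonempty monomial in x(1),...,x(m). -/

import Mathlib

/-!
Monomials of `K[x(i)_j]` are read as configurations `ν : Fin n → Fin m → ℕ` of `n` exponent
columns. The coefficients of an invariant are constant on `S_n`-orbits of monomials, so invariants
are spanned by orbit sums, and it suffices to generate every orbit sum. We induct on the number of
nonzero columns. If `μ` has exactly `r` columns equal to a nonzero `w`, and `ν` is `μ` with these
columns set to `0`, then `orbitSum ν * σ_r(w)` is `orbitSum μ` plus the terms in which a copy of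
`w` lands on a nonzero column of `ν`. These terms form an invariant polynomial all of whose
monomials have fewer nonzero columns than `μ`.
-/

open MvPolynomial

/-- `σ_r(w)`: the `r`-th elementary symmetric polynomial of the substitutions
`w_{⟨1⟩}, …, w_{⟨n⟩}` of the monomial `w = x(1)^{a 1} ⋯ x(m)^{a m}`. -/
noncomputable def sigmaMon (K : Type*) [CommRing K] (m n : ℕ) (r : ℕ) (a : Fin m → ℕ) :
    MvPolynomial (Fin m × Fin n) K :=
  ∑ S ∈ Finset.univ.powersetCard r, ∏ j ∈ S, ∏ i : Fin m, X (i, j) ^ a i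

/-- `f` is invariant under the `S_n`-action permuting the index `j`. -/
def IsMultiSymm {K : Type*} [CommRing K] {m n : ℕ} (f : MvPolynomial (Fin m × Fin n) K) :
    Prop :=
  ∀ σ : Equiv.Perm (Fin n), rename (fun p : Fin m × Fin n => (p.1, σ p.2)) f = f

lemma exists_perm_comp_eq_of_sum_singleton_eq {α β : Type*} [Fintype α] {f g : α → β}
    (h : ∑ a, ({f a} : Multiset β) = ∑ a, {g a}) : ∃ τ : Equiv.Perm α, f ∘ τ = g := by
  classical
  have hfiber (b : β) : Fintype.card {a // g a = b} = Fintype.card {a // f a = b} := by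
    have := congrArg (Multiset.count b) h
    simp only [Multiset.count_sum', Multiset.count_singleton] at this
    simpa [Fintype.card_subtype, Finset.sum_boole, eq_comm] using this.symm
  exact ⟨Equiv.ofFiberEquiv fun b => Fintype.equivOfCardEq (hfiber b),
    funext (Equiv.ofFiberEquiv_map _)⟩

namespace MultiSymm

open Finset

variable {K : Type*} [CommRing K] {m n : ℕ}

/-- Column `j` of a configuration is the exponent vector of `x(1)_j, …, x(m)_j`. -/
noncomputable def expEquiv : (Fin n → Fin m → ℕ) ≃+ ((Fin m × Fin n) →₀ ℕ) where
  toFun ν := Finsupp.equivFunOnFinite.symm fun p => ν p.2 p.1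
  invFun d j i := d (i, j)
  left_inv _ := rfl
  right_inv _ := by ext; rfl
  map_add' _ _ := by ext; rfl

@[simp]
lemma expEquiv_apply (ν : Fin n → Fin m → ℕ) (p : Fin m × Fin n) : expEquiv ν p = ν p.2 p.1 :=
  rfl

variable (K) in
noncomputable def configMon (ν : Fin n → Fin m → ℕ) : MvPolynomial (Fin m × Fin n) K :=
  monomial (expEquiv ν) 1

lemma configMon_add (ν ν' : Fin n → Fin m → ℕ) :
    configMon K (ν + ν') = configMon K ν * configMon K ν' := by
  rw [configMon, configMon, configMon, monomial_mul, map_add, one_mul]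

lemma configMon_eq_prod (ν : Fin n → Fin m → ℕ) :
    configMon K ν = ∏ j, ∏ i, X (i, j) ^ ν j i := by
  rw [configMon, monomial_eq, C_1, one_mul, Finsupp.prod_fintype _ _ fun _ => pow_zero _,
    Fintype.prod_prod_type, prod_comm]
  rfl

lemma prodMap_id_perm_injective (σ : Equiv.Perm (Fin n)) :
    Function.Injective fun p : Fin m × Fin n => (p.1, σ p.2) :=
  (Equiv.prodCongr (Equiv.refl _) σ).injective

lemma mapDomain_expEquiv (σ : Equiv.Perm (Fin n)) (ν : Fin n → Fin m → ℕ) :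
    (expEquiv ν).mapDomain (fun p : Fin m × Fin n => (p.1, σ p.2)) = expEquiv (ν ∘ σ.symm) := by
  ext ⟨i, j⟩
  obtain ⟨j, rfl⟩ := σ.surjective j
  exact (Finsupp.mapDomain_apply (prodMap_id_perm_injective σ) _ (i, j)).trans (by simp)

lemma rename_configMon (σ : Equiv.Perm (Fin n)) (ν : Fin n → Fin m → ℕ) :
    rename (fun p : Fin m × Fin n => (p.1, σ p.2)) (configMon K ν) = configMon K (ν ∘ σ.symm) := by
  rw [configMon, rename_monomial, mapDomain_expEquiv, configMon]

lemma coeff_comp_perm {f : MvPolynomial (Fin m × Fin n) K} (hf : IsMultiSymm f)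
    (ν : Fin n → Fin m → ℕ) (τ : Equiv.Perm (Fin n)) :
    coeff (expEquiv (ν ∘ τ)) f = coeff (expEquiv ν) f := by
  calc coeff (expEquiv (ν ∘ τ)) f
      = coeff ((expEquiv (ν ∘ τ)).mapDomain fun p : Fin m × Fin n => (p.1, τ p.2))
          (rename (fun p : Fin m × Fin n => (p.1, τ p.2)) f) :=
        (coeff_rename_mapDomain _ (prodMap_id_perm_injective τ) _ _).symm
    _ = coeff (expEquiv ν) f := by
        rw [mapDomain_expEquiv, hf τ, Function.comp_assoc, Equiv.self_comp_symm,
          Function.comp_id]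

lemma exists_eq_of_mem_support_sum_configMon {ι : Type*} {s : Finset ι}
    {g : ι → Fin n → Fin m → ℕ} {ν : Fin n → Fin m → ℕ}
    (h : expEquiv ν ∈ (∑ i ∈ s, configMon K (g i)).support) :
    ∃ i ∈ s, ν = g i := by
  obtain ⟨i, hi, hν⟩ := mem_biUnion.1 (support_sum h)
  exact ⟨i, hi, expEquiv.injective (mem_singleton.1 (support_monomial_subset hν))⟩

def columns (ν : Fin n → Fin m → ℕ) : Multiset (Fin m → ℕ) :=
  ∑ j, {ν j}

def orbit (μ : Fin n → Fin m → ℕ) : Finset (Fin n → Fin m → ℕ) :=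
  univ.image fun τ : Equiv.Perm (Fin n) => μ ∘ τ

lemma columns_comp_perm (ν : Fin n → Fin m → ℕ) (τ : Equiv.Perm (Fin n)) :
    columns (ν ∘ τ) = columns ν :=
  Equiv.sum_comp τ fun j => {ν j}

lemma mem_orbit_iff {μ ν : Fin n → Fin m → ℕ} : ν ∈ orbit μ ↔ columns ν = columns μ := by
  refine ⟨fun hν => ?_, fun h => ?_⟩
  · obtain ⟨τ, -, rfl⟩ := mem_image.1 hν
    exact columns_comp_perm μ τ
  · obtain ⟨τ, hτ⟩ := exists_perm_comp_eq_of_sum_singleton_eq h.symm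
    exact mem_image.2 ⟨τ, mem_univ _, hτ⟩

lemma self_mem_orbit (μ : Fin n → Fin m → ℕ) : μ ∈ orbit μ := mem_orbit_iff.2 rfl

lemma comp_perm_mem_orbit {μ ν : Fin n → Fin m → ℕ} (τ : Equiv.Perm (Fin n)) :
    ν ∘ τ ∈ orbit μ ↔ ν ∈ orbit μ := by
  rw [mem_orbit_iff, mem_orbit_iff, columns_comp_perm]

variable (K) in
noncomputable def orbitSum (μ : Fin n → Fin m → ℕ) : MvPolynomial (Fin m × Fin n) K :=
  ∑ ν ∈ orbit μ, configMon K ν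

lemma isMultiSymm_orbitSum (μ : Fin n → Fin m → ℕ) : IsMultiSymm (orbitSum K μ) := by
  intro σ
  rw [orbitSum, map_sum]
  simp_rw [rename_configMon]
  exact sum_nbij' (· ∘ σ.symm) (· ∘ σ) (fun ν hν => (comp_perm_mem_orbit _).2 hν)
    (fun ν hν => (comp_perm_mem_orbit _).2 hν) (fun ν _ => by simp [Function.comp_assoc])
    (fun ν _ => by simp [Function.comp_assoc]) fun _ _ => rfl

lemma coeff_orbitSum (μ ν : Fin n → Fin m → ℕ) :
    coeff (expEquiv ν) (orbitSum K μ) = if ν ∈ orbit μ then 1 else 0 := by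
  simp [orbitSum, configMon, coeff_sum, coeff_monomial]

lemma orbitSum_zero : orbitSum K (0 : Fin n → Fin m → ℕ) = 1 := by
  simp [orbitSum, orbit, configMon, image_const univ_nonempty]

lemma support_sub_smul_orbitSum {f : MvPolynomial (Fin m × Fin n) K} (hf : IsMultiSymm f)
    (μ : Fin n → Fin m → ℕ) :
    (f - coeff (expEquiv μ) f • orbitSum K μ).support ⊆ f.support.erase (expEquiv μ) := by
  intro d hd
  obtain ⟨ν, rfl⟩ := expEquiv.surjective d
  rw [mem_support_iff, coeff_sub, coeff_smul, coeff_orbitSum, smul_eq_mul] at hd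
  by_cases hν : ν ∈ orbit μ
  · obtain ⟨τ, -, rfl⟩ := mem_image.1 hν
    rw [if_pos hν, coeff_comp_perm hf, mul_one, sub_self] at hd
    exact absurd rfl hd
  · rw [if_neg hν, mul_zero, sub_zero] at hd
    refine mem_erase.2 ⟨fun h => hν ?_, mem_support_iff.2 hd⟩
    rw [expEquiv.injective h]
    exact self_mem_orbit μ

lemma mem_of_orbitSum_mem {M : Submodule K (MvPolynomial (Fin m × Fin n) K)}
    {f : MvPolynomial (Fin m × Fin n) K} (hf : IsMultiSymm f)
    (hM : ∀ ν, expEquiv ν ∈ f.support → orbitSum K ν ∈ M) : f ∈ M := by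
  induction hN : f.support.card using Nat.strong_induction_on generalizing f with
  | _ N ih =>
  obtain hf0 | ⟨d, hd⟩ := f.support.eq_empty_or_nonempty
  · rw [support_eq_empty.1 hf0]
    exact M.zero_mem
  obtain ⟨μ, rfl⟩ := expEquiv.surjective d
  set g := f - coeff (expEquiv μ) f • orbitSum K μ with hg
  have hsupp := support_sub_smul_orbitSum hf μ
  have hg_inv : IsMultiSymm g := fun σ => by
    rw [hg, map_sub, map_smul, hf σ, isMultiSymm_orbitSum μ σ]
  have hgM : g ∈ M :=
    ih _ (hN ▸ (card_le_card hsupp).trans_lt (card_erase_lt_of_mem hd)) hg_inv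
      (fun ν hν => hM ν (mem_of_mem_erase (hsupp hν))) rfl
  rw [← sub_add_cancel f (coeff (expEquiv μ) f • orbitSum K μ)]
  exact M.add_mem hgM (M.smul_mem _ (hM μ hd))

def fill (S : Finset (Fin n)) (w : Fin m → ℕ) : Fin n → Fin m → ℕ :=
  fun j => if j ∈ S then w else 0

lemma sigmaMon_eq_sum (r : ℕ) (w : Fin m → ℕ) :
    sigmaMon K m n r w = ∑ S ∈ univ.powersetCard r, configMon K (fill S w) := by
  refine sum_congr rfl fun S _ => ?_
  rw [configMon_eq_prod, ← Fintype.prod_ite_mem]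
  refine prod_congr rfl fun j _ => ?_
  by_cases hj : j ∈ S <;> simp [fill, hj]

lemma fill_comp_perm (S : Finset (Fin n)) (w : Fin m → ℕ) (σ : Equiv.Perm (Fin n)) :
    fill S w ∘ σ.symm = fill (σ.finsetCongr S) w := by
  ext j : 1
  simp [fill, Equiv.finsetCongr_apply, mem_map_equiv]

lemma isMultiSymm_sigmaMon (r : ℕ) (w : Fin m → ℕ) : IsMultiSymm (sigmaMon K m n r w) := by
  intro σ
  rw [sigmaMon_eq_sum, map_sum]
  simp_rw [rename_configMon, fill_comp_perm]
  exact sum_equiv σ.finsetCongr (by simp [Equiv.finsetCongr_apply]) fun _ _ => rfl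

def colSupport (ν : Fin n → Fin m → ℕ) : Finset (Fin n) :=
  univ.filter fun j => ν j ≠ 0

def eraseCol (ν : Fin n → Fin m → ℕ) (w : Fin m → ℕ) : Fin n → Fin m → ℕ :=
  fun j => if ν j = w then 0 else ν j

lemma card_colSupport_comp_perm (ν : Fin n → Fin m → ℕ) (τ : Equiv.Perm (Fin n)) :
    #(colSupport (ν ∘ τ)) = #(colSupport ν) :=
  card_equiv τ fun _ => by simp [colSupport]

lemma colSupport_add_fill (ν : Fin n → Fin m → ℕ) (S : Finset (Fin n)) {w : Fin m → ℕ}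
    (hw : w ≠ 0) : colSupport (ν + fill S w) = colSupport ν ∪ S := by
  ext j
  by_cases hj : j ∈ S <;> simp [colSupport, fill, hj, hw]

lemma eq_zero_of_disjoint_colSupport {ν : Fin n → Fin m → ℕ} {S : Finset (Fin n)}
    (hS : Disjoint S (colSupport ν)) {j : Fin n} (hj : j ∈ S) : ν j = 0 := by
  simpa [colSupport] using disjoint_left.1 hS hj

lemma columns_add_fill {ν : Fin n → Fin m → ℕ} {S : Finset (Fin n)} (w : Fin m → ℕ)
    (hS : Disjoint S (colSupport ν)) :
    columns (ν + fill S w) + #S • {0} = columns ν + #S • {w} := by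
  have hfill : ∑ j ∈ S, ({(ν + fill S w) j} : Multiset _) = #S • {w} := by
    rw [← sum_const]
    exact sum_congr rfl fun j hj => by simp [fill, hj, eq_zero_of_disjoint_colSupport hS hj]
  have hzero : ∑ j ∈ S, ({ν j} : Multiset _) = #S • {0} := by
    rw [← sum_const]
    exact sum_congr rfl fun j hj => by rw [eq_zero_of_disjoint_colSupport hS hj]
  have hrest : ∑ j ∈ Sᶜ, ({(ν + fill S w) j} : Multiset _) = ∑ j ∈ Sᶜ, {ν j} :=
    sum_congr rfl fun j hj => by simp [fill, mem_compl.1 hj]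
  rw [columns, columns, ← sum_add_sum_compl S, ← sum_add_sum_compl S (fun j => {ν j}), hfill,
    hzero, hrest]
  abel

lemma filter_add_fill_eq {ν : Fin n → Fin m → ℕ} {S : Finset (Fin n)} {w : Fin m → ℕ}
    (hνw : ∀ j, ν j ≠ w) (hS : Disjoint S (colSupport ν)) :
    univ.filter (fun j => (ν + fill S w) j = w) = S := by
  ext j
  rw [mem_filter]
  by_cases hj : j ∈ S
  · simp [fill, hj, eq_zero_of_disjoint_colSupport hS hj]
  · simp [fill, hj, hνw j]

lemma eraseCol_add_fill {ν : Fin n → Fin m → ℕ} {S : Finset (Fin n)} {w : Fin m → ℕ}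
    (hνw : ∀ j, ν j ≠ w) (hS : Disjoint S (colSupport ν)) : eraseCol (ν + fill S w) w = ν := by
  ext j : 1
  by_cases hj : j ∈ S
  · simp [eraseCol, fill, hj, eq_zero_of_disjoint_colSupport hS hj]
  · simp [eraseCol, fill, hj, hνw j]

lemma eraseCol_add_fill_filter (ν : Fin n → Fin m → ℕ) (w : Fin m → ℕ) :
    eraseCol ν w + fill (univ.filter (ν · = w)) w = ν := by
  ext j : 1
  by_cases hj : ν j = w <;> simp [eraseCol, fill, hj]

lemma disjoint_filter_colSupport_eraseCol (ν : Fin n → Fin m → ℕ) (w : Fin m → ℕ) :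
    Disjoint (univ.filter (ν · = w)) (colSupport (eraseCol ν w)) :=
  disjoint_left.2 fun j hj hj' => by simp_all [colSupport, eraseCol]

lemma sum_disjoint_eq_orbitSum {ν : Fin n → Fin m → ℕ} {S : Finset (Fin n)} {w : Fin m → ℕ}
    (hνw : ∀ j, ν j ≠ w) (hS : Disjoint S (colSupport ν)) :
    ∑ q ∈ (orbit ν ×ˢ univ.powersetCard #S).filter (fun q => Disjoint q.2 (colSupport q.1)),
      configMon K (q.1 + fill q.2 w) = orbitSum K (ν + fill S w) := by
  refine sum_nbij' (fun q => q.1 + fill q.2 w)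
    (fun μ => (eraseCol μ w, univ.filter (μ · = w))) ?_ ?_ ?_ ?_ fun _ _ => rfl
  · rintro ⟨ν', T⟩ hq
    simp only [mem_filter, mem_product, mem_powersetCard] at hq
    obtain ⟨⟨hν', -, hT⟩, hdisj⟩ := hq
    refine mem_orbit_iff.2 (add_right_cancel (b := #S • {0}) ?_)
    rw [columns_add_fill w hS, ← hT, columns_add_fill w hdisj, mem_orbit_iff.1 hν']
  · intro μ hμ
    obtain ⟨τ, -, rfl⟩ := mem_image.1 hμ
    have hcard : #(univ.filter fun j => ((ν + fill S w) ∘ τ) j = w) = #S := by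
      rw [← congrArg card (filter_add_fill_eq hνw hS)]
      exact card_equiv τ fun _ => by simp
    simp only [mem_filter, mem_product, mem_powersetCard]
    refine ⟨⟨?_, subset_univ _, hcard⟩, disjoint_filter_colSupport_eraseCol _ _⟩
    rw [show eraseCol ((ν + fill S w) ∘ τ) w = eraseCol (ν + fill S w) w ∘ τ from rfl,
      eraseCol_add_fill hνw hS]
    exact mem_image.2 ⟨τ, mem_univ _, rfl⟩
  · rintro ⟨ν', T⟩ hq
    simp only [mem_filter, mem_product] at hq
    obtain ⟨⟨hν', -⟩, hdisj⟩ := hq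
    obtain ⟨τ, -, rfl⟩ := mem_image.1 hν'
    exact Prod.ext (eraseCol_add_fill (fun j => hνw (τ j)) hdisj)
      (filter_add_fill_eq (fun j => hνw (τ j)) hdisj)
  · intro μ _
    exact eraseCol_add_fill_filter μ w

variable (K) in
noncomputable def overlapSum (ν : Fin n → Fin m → ℕ) (r : ℕ) (w : Fin m → ℕ) :
    MvPolynomial (Fin m × Fin n) K :=
  ∑ q ∈ (orbit ν ×ˢ univ.powersetCard r).filter (fun q => ¬Disjoint q.2 (colSupport q.1)),
    configMon K (q.1 + fill q.2 w)

lemma orbitSum_mul_sigmaMon {ν : Fin n → Fin m → ℕ} {S : Finset (Fin n)} {w : Fin m → ℕ}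
    (hνw : ∀ j, ν j ≠ w) (hS : Disjoint S (colSupport ν)) :
    orbitSum K ν * sigmaMon K m n #S w = orbitSum K (ν + fill S w) + overlapSum K ν #S w := by
  rw [orbitSum, sigmaMon_eq_sum, sum_mul_sum, ← sum_product', ← sum_disjoint_eq_orbitSum hνw hS,
    overlapSum, sum_filter_add_sum_filter_not]
  simp_rw [configMon_add]

lemma card_colSupport_lt_of_mem_support_overlapSum {ν μ : Fin n → Fin m → ℕ}
    {S : Finset (Fin n)} {w : Fin m → ℕ} (hw : w ≠ 0) (hS : Disjoint S (colSupport ν))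
    (hμ : expEquiv μ ∈ (overlapSum K ν #S w).support) :
    #(colSupport μ) < #(colSupport (ν + fill S w)) := by
  obtain ⟨⟨ν', T⟩, hq, rfl⟩ := exists_eq_of_mem_support_sum_configMon hμ
  simp only [mem_filter, mem_product, mem_powersetCard] at hq
  obtain ⟨⟨hν', -, hT⟩, hoverlap⟩ := hq
  obtain ⟨τ, -, rfl⟩ := mem_image.1 hν'
  rw [colSupport_add_fill _ _ hw, colSupport_add_fill _ _ hw,
    card_union_eq_card_add_card.2 hS.symm, ← card_colSupport_comp_perm ν τ, ← hT]
  exact (card_union_le _ _).lt_of_ne fun h => hoverlap (card_union_eq_card_add_card.1 h).symm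

variable (K m n) in
def sigmaGens : Set (MvPolynomial (Fin m × Fin n) K) :=
  {f | ∃ r : ℕ, ∃ a : Fin m → ℕ, 1 ≤ r ∧ r ≤ n ∧ a ≠ 0 ∧ f = sigmaMon K m n r a}

lemma orbitSum_mem_adjoin (μ : Fin n → Fin m → ℕ) :
    orbitSum K μ ∈ Algebra.adjoin K (sigmaGens K m n) := by
  induction hN : #(colSupport μ) using Nat.strong_induction_on generalizing μ with
  | _ N ih =>
  obtain hμ | ⟨j₀, hj₀⟩ := (colSupport μ).eq_empty_or_nonempty
  · obtain rfl : μ = 0 := funext fun j => by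
      simpa [colSupport] using eq_empty_iff_forall_notMem.1 hμ j
    rw [orbitSum_zero]
    exact one_mem _
  set w := μ j₀
  set S := univ.filter (μ · = w)
  set ν := eraseCol μ w
  have hw : w ≠ 0 := (mem_filter.1 hj₀).2
  have hνw : ∀ j, ν j ≠ w := fun j => by
    by_cases hj : μ j = w <;> simp [ν, eraseCol, hj, hw.symm]
  have hS : Disjoint S (colSupport ν) := disjoint_filter_colSupport_eraseCol μ w
  have hμ : ν + fill S w = μ := eraseCol_add_fill_filter μ w
  have hS_pos : 0 < #S := card_pos.2 ⟨j₀, mem_filter.2 ⟨mem_univ _, rfl⟩⟩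
  have hν_lt : #(colSupport ν) < N := by
    rw [← hN, ← hμ, colSupport_add_fill _ _ hw, card_union_eq_card_add_card.2 hS.symm]
    omega
  have hprod : orbitSum K ν * sigmaMon K m n #S w ∈ Algebra.adjoin K (sigmaGens K m n) :=
    mul_mem (ih _ hν_lt ν rfl) (Algebra.subset_adjoin
      ⟨#S, w, hS_pos, (card_le_univ S).trans (Fintype.card_fin n).le, hw, rfl⟩)
  have hdecomp := orbitSum_mul_sigmaMon (K := K) hνw hS
  have hoverlap_inv : IsMultiSymm (overlapSum K ν #S w) := fun σ => by
    rw [eq_sub_of_add_eq' hdecomp.symm, map_sub, map_mul, isMultiSymm_orbitSum ν σ,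
      isMultiSymm_sigmaMon _ _ σ, isMultiSymm_orbitSum _ σ]
  have hoverlap : overlapSum K ν #S w ∈ Algebra.adjoin K (sigmaGens K m n) :=
    mem_of_orbitSum_mem (M := Subalgebra.toSubmodule (Algebra.adjoin K (sigmaGens K m n)))
      hoverlap_inv fun μ' hμ' =>
      ih _ (hN ▸ hμ ▸ card_colSupport_lt_of_mem_support_overlapSum hw hS hμ') μ' rfl
  rw [← hμ, eq_sub_of_add_eq hdecomp.symm]
  exact sub_mem hprod hoverlap

variable (K m n) in
noncomputable def multiSymmSubalgebra : Subalgebra K (MvPolynomial (Fin m × Fin n) K) :=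
  ⨅ σ : Equiv.Perm (Fin n),
    AlgHom.equalizer (rename fun p : Fin m × Fin n => (p.1, σ p.2)) (AlgHom.id K _)

lemma mem_multiSymmSubalgebra {f : MvPolynomial (Fin m × Fin n) K} :
    f ∈ multiSymmSubalgebra K m n ↔ IsMultiSymm f := by
  rw [multiSymmSubalgebra, Algebra.mem_iInf]
  rfl

lemma adjoin_sigmaGens_eq : Algebra.adjoin K (sigmaGens K m n) = multiSymmSubalgebra K m n := by
  refine le_antisymm (Algebra.adjoin_le ?_) fun f hf => ?_
  · rintro _ ⟨r, a, -, -, -, rfl⟩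
    exact mem_multiSymmSubalgebra.2 (isMultiSymm_sigmaMon r a)
  · exact mem_of_orbitSum_mem (M := Subalgebra.toSubmodule (Algebra.adjoin K (sigmaGens K m n)))
      (mem_multiSymmSubalgebra.1 hf) fun ν _ => orbitSum_mem_adjoin ν

end MultiSymm

/-- Over an arbitrary commutative ring `K`, the ring of multisymmetric functions
`K[V^m]^{S_n}` is generated as a `K`-algebra by the elements `σ_r(w)`, for
`1 ≤ r ≤ n` and `w` a nonempty monomial in `x(1), …, x(m)`. -/
theorem multisymm_generated_by_sigma
    (K : Type*) [CommRing K] (m n : ℕ) :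
    (Algebra.adjoin K {f : MvPolynomial (Fin m × Fin n) K |
        ∃ r : ℕ, ∃ a : Fin m → ℕ, 1 ≤ r ∧ r ≤ n ∧ a ≠ 0 ∧ f = sigmaMon K m n r a} :
      Set (MvPolynomial (Fin m × Fin n) K)) = {f | IsMultiSymm f} := by
  ext f
  exact (SetLike.ext_iff.1 MultiSymm.adjoin_sigmaGens_eq f).trans
    MultiSymm.mem_multiSymmSubalgebra
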